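/- arXiv:math/0612201 — 2 statements merged into one kernel-verified Lean document; each statement's English description precedes it below -/
import Mathlib

section
/- Let $X_1, X_2$ be reduced complex analytic spaces with singular loci $\Sigma_1, \Sigma_2$, normalisations $n_i : \hat{X}_i \to X_i$, and let $h : X_1 \to X_2$ be a homeomorphism with $h(\Sigma_1) = \Sigma_2$. Then there exists a unique homeomorphism $g : \hat{X}_1 \to \hat{X}_2$ with $n_2 \circ g = h \circ n_1$. -/
/-- A subset `S ⊆ X` is locally connected at a point `p` if every neighbourhood of `p`
contains a neighbourhood `V` of `p` such that `V ∩ S` is preconnected. -/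
def LocallyConnectedAlongAt {X : Type*} [TopologicalSpace X] (S : Set X) (p : X) : Prop :=
  ∀ U ∈ nhds p, ∃ V ∈ nhds p, V ⊆ U ∧ IsPreconnected (V ∩ S)

open Filter Topology Set Function

/-- A filter mapping into `𝓝 x` under a proper map is eventually in any open set
containing the fibre over `x`. -/
lemma lemB {X Y : Type*} [TopologicalSpace X] [TopologicalSpace Y] {n : Y → X}
    (hp : IsProperMap n) {L : Filter Y} {x : X} (hL : Filter.map n L ≤ 𝓝 x)
    {W : Set Y} (hW : IsOpen W) (hFW : n ⁻¹' {x} ⊆ W) : W ∈ L := by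
  by_contra hWL
  have hne : NeBot (L ⊓ 𝓟 Wᶜ) := by
    rw [inf_principal_neBot_iff]
    intro U hU
    by_contra hemp
    exact hWL (mem_of_superset hU (by
      intro a ha
      by_contra haW
      exact hemp ⟨a, ha, haW⟩))
  have hmap : Filter.map n (L ⊓ 𝓟 Wᶜ) ≤ 𝓝 x := le_trans (Filter.map_mono inf_le_left) hL
  have hcl : MapClusterPt x (L ⊓ 𝓟 Wᶜ) n := by
    have : NeBot (Filter.map n (L ⊓ 𝓟 Wᶜ)) := Filter.map_neBot
    exact .mk (by rw [inf_eq_right.2 hmap]; exact this.ne)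
  obtain ⟨q, hq, hqcl⟩ := hp.clusterPt_of_mapClusterPt hcl
  have hqW : q ∈ W := hFW hq
  have hqWc : q ∈ closure Wᶜ := by
    rw [mem_closure_iff_clusterPt]
    exact hqcl.mono (le_trans inf_le_right le_rfl)
  rw [hW.isClosed_compl.closure_eq] at hqWc
  exact hqWc hqW

/-- A filter with a basis of preconnected sets mapping to `𝓝 x` under a proper map
with finite fibres converges to a point of the fibre. -/
lemma lemA {X Y : Type*} [TopologicalSpace X] [TopologicalSpace Y] [T2Space Y] {n : Y → X}
    (hp : IsProperMap n) {x : X} (hfin : (n ⁻¹' {x}).Finite)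
    {L : Filter Y} [NeBot L] (hL : Filter.map n L ≤ 𝓝 x)
    (hconn : ∀ s ∈ L, ∃ t ∈ L, t ⊆ s ∧ IsPreconnected t) :
    ∃ q, n q = x ∧ L ≤ 𝓝 q := by
  have hcl : MapClusterPt x L n := by
    have : NeBot (Filter.map n L) := Filter.map_neBot
    exact .mk (by rw [inf_eq_right.2 hL]; exact this.ne)
  obtain ⟨q, hq, hqcl⟩ := hp.clusterPt_of_mapClusterPt hcl
  refine ⟨q, hq, fun N hN => ?_⟩
  -- separate `q` from the rest of the fibre
  have sep : ∀ p ∈ (n ⁻¹' {x}) \ {q}, ∃ uv : Set Y × Set Y,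
      IsOpen uv.1 ∧ IsOpen uv.2 ∧ q ∈ uv.1 ∧ p ∈ uv.2 ∧ Disjoint uv.1 uv.2 := by
    intro p hp'
    obtain ⟨u, v, hu, hv, hqu, hpv, huv⟩ := t2_separation (Ne.symm hp'.2)
    exact ⟨(u, v), hu, hv, hqu, hpv, huv⟩
  choose! uv huv1 huv2 huvq huvp huvd using sep
  set F' := (n ⁻¹' {x}) \ {q} with hF'
  have hF'fin : F'.Finite := hfin.diff
  set u : Set Y := interior N ∩ ⋂ p ∈ F', (uv p).1 with hu_def
  set v : Set Y := ⋃ p ∈ F', (uv p).2 with hv_def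
  have hu : IsOpen u := isOpen_interior.inter (hF'fin.isOpen_biInter huv1)
  have hv : IsOpen v := isOpen_biUnion huv2
  have hqu : q ∈ u := ⟨mem_interior_iff_mem_nhds.2 hN, mem_iInter₂.2 huvq⟩
  have hduv : Disjoint u v := by
    rw [Set.disjoint_left]
    rintro a ⟨-, ha⟩ hav
    obtain ⟨p, hpF, hap⟩ := mem_iUnion₂.1 hav
    exact ((huvd p hpF).le_bot ⟨mem_iInter₂.1 ha p hpF, hap⟩)
  have hWopen : IsOpen (u ∪ v) := hu.union hv
  have hFW : n ⁻¹' {x} ⊆ u ∪ v := by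
    intro p hpF
    by_cases hpq : p = q
    · exact Or.inl (hpq ▸ hqu)
    · exact Or.inr (mem_iUnion₂.2 ⟨p, ⟨hpF, hpq⟩, huvp p ⟨hpF, hpq⟩⟩)
  have hWL : u ∪ v ∈ L := lemB hp hL hWopen hFW
  obtain ⟨t, htL, htW, htconn⟩ := hconn _ hWL
  have hqt : q ∈ closure t :=
    mem_closure_iff_clusterPt.2 (hqcl.mono (le_principal_iff.2 htL))
  have htu : (t ∩ u).Nonempty := by
    obtain ⟨a, ha⟩ := mem_closure_iff.1 hqt u hu hqu
    exact ⟨a, ha.2, ha.1⟩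
  have : t ⊆ u := htconn.subset_left_of_subset_union hu hv hduv htW htu
  exact mem_of_superset htL (this.trans ((inter_subset_left).trans interior_subset))

/-- Existence of a continuous lift of a homeomorphism through normalisation maps. -/
lemma liftCont {X₁ X₂ Y₁ Y₂ : Type*}
    [TopologicalSpace X₁] [TopologicalSpace X₂] [TopologicalSpace Y₁] [TopologicalSpace Y₂]
    [T2Space Y₂] [LocallyCompactSpace Y₂] [Nonempty Y₂]
    (S₁ : Set X₁) (S₂ : Set X₂) (n₁ : Y₁ → X₁) (n₂ : Y₂ → X₂)
    (hn₁c : Continuous n₁) (hn₂p : IsProperMap n₂)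
    (hfin₂ : ∀ x : X₂, (n₂ ⁻¹' {x}).Finite)
    (hbij₂ : Set.BijOn n₂ (n₂ ⁻¹' S₂)ᶜ S₂ᶜ)
    (hdense₁ : Dense (n₁ ⁻¹' S₁)ᶜ)
    (hnorm₁ : ∀ y ∈ n₁ ⁻¹' S₁, LocallyConnectedAlongAt (n₁ ⁻¹' S₁)ᶜ y)
    (h : X₁ ≃ₜ X₂) (hS : h '' S₁ = S₂) :
    ∃ G : Y₁ → Y₂, Continuous G ∧ ∀ y, n₂ (G y) = h (n₁ y) := by
  set U₁ : Set Y₁ := (n₁ ⁻¹' S₁)ᶜ with hU₁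
  have hS' : ∀ x, h x ∈ S₂ ↔ x ∈ S₁ := by
    intro x
    constructor
    · intro hx
      rw [← hS] at hx
      obtain ⟨a, haS, ha⟩ := hx
      rwa [← h.injective ha]
    · intro hx
      rw [← hS]; exact ⟨x, hx, rfl⟩
  set g₀ : Y₁ → Y₂ := fun y => Function.invFunOn n₂ (n₂ ⁻¹' S₂)ᶜ (h (n₁ y)) with hg₀
  have key : ∀ y, n₁ y ∉ S₁ → g₀ y ∈ (n₂ ⁻¹' S₂)ᶜ ∧ n₂ (g₀ y) = h (n₁ y) := by
    intro y hy
    have hx : h (n₁ y) ∈ S₂ᶜ := fun hc => hy ((hS' _).1 hc)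
    obtain ⟨q, hq1, hq2⟩ := hbij₂.surjOn hx
    exact ⟨Function.invFunOn_mem ⟨q, hq1, hq2⟩, Function.invFunOn_eq ⟨q, hq1, hq2⟩⟩
  have single : ∀ y, n₁ y ∉ S₁ → ∀ p, n₂ p = h (n₁ y) → p = g₀ y := by
    intro y hy p hp
    have hx : h (n₁ y) ∉ S₂ := fun hc => hy ((hS' _).1 hc)
    have hpU : p ∈ (n₂ ⁻¹' S₂)ᶜ := by
      intro hc; exact hx (hp ▸ hc)
    exact hbij₂.injOn hpU (key y hy).1 (hp.trans (key y hy).2.symm)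
  have hNB : ∀ y : Y₁, NeBot (𝓝[U₁] y) := fun y =>
    mem_closure_iff_nhdsWithin_neBot.1 (hdense₁ y)
  -- continuity of g₀ on U₁
  have hg₀cont : ContinuousOn g₀ U₁ := by
    intro y hy
    have hy' : n₁ y ∉ S₁ := hy
    rw [ContinuousWithinAt]
    rw [(nhds_basis_opens (g₀ y)).tendsto_right_iff]
    rintro N ⟨hgN, hNopen⟩
    have hMc : IsClosed (n₂ '' Nᶜ) := hn₂p.isClosedMap _ hNopen.isClosed_compl
    have hxM : h (n₁ y) ∈ (n₂ '' Nᶜ)ᶜ := by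
      rintro ⟨p, hpN, hp⟩
      exact hpN ((single y hy' p hp) ▸ hgN)
    have hO : (h ∘ n₁) ⁻¹' (n₂ '' Nᶜ)ᶜ ∈ 𝓝 y :=
      ((hMc.isOpen_compl.preimage (h.continuous.comp hn₁c)).mem_nhds hxM)
    filter_upwards [nhdsWithin_le_nhds hO, self_mem_nhdsWithin] with y' hy'M hy'U
    by_contra hgy'
    exact hy'M ⟨g₀ y', hgy', (key y' hy'U).2⟩
  -- convergence at singular points
  have conv : ∀ y, n₁ y ∈ S₁ →
      ∃ q, n₂ q = h (n₁ y) ∧ Filter.Tendsto g₀ (𝓝[U₁] y) (𝓝 q) := by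
    intro y hy
    haveI := hNB y
    set L := Filter.map g₀ (𝓝[U₁] y) with hL_def
    haveI : NeBot L := Filter.map_neBot
    have hL : Filter.map n₂ L ≤ 𝓝 (h (n₁ y)) := by
      rw [hL_def, Filter.map_map]
      have hcongr : Filter.map (n₂ ∘ g₀) (𝓝[U₁] y) = Filter.map (h ∘ n₁) (𝓝[U₁] y) := by
        apply Filter.map_congr
        filter_upwards [self_mem_nhdsWithin] with y' hy'
        exact (key y' hy').2
      rw [hcongr]
      exact le_trans (Filter.map_mono nhdsWithin_le_nhds)
        ((h.continuous.comp hn₁c).continuousAt (x := y))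
    have hconn : ∀ s ∈ L, ∃ t ∈ L, t ⊆ s ∧ IsPreconnected t := by
      intro s hs
      rw [hL_def, Filter.mem_map, mem_nhdsWithin] at hs
      obtain ⟨O, hOopen, hyO, hOs⟩ := hs
      obtain ⟨V, hV, hVO, hVconn⟩ := hnorm₁ y hy O (hOopen.mem_nhds hyO)
      refine ⟨g₀ '' (V ∩ U₁), ?_, ?_, hVconn.image _ (hg₀cont.mono inter_subset_right)⟩
      · rw [hL_def, Filter.mem_map]
        exact Filter.mem_of_superset
          (Filter.inter_mem (mem_nhdsWithin_of_mem_nhds hV) self_mem_nhdsWithin)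
          (subset_preimage_image _ _)
      · rw [image_subset_iff]
        exact fun a ha => hOs ⟨hVO ha.1, ha.2⟩
    obtain ⟨q, hq, hqL⟩ := lemA hn₂p (hfin₂ _) hL hconn
    exact ⟨q, hq, hqL⟩
  classical
  set G : Y₁ → Y₂ := fun y => if hy : n₁ y ∈ S₁ then (conv y hy).choose else g₀ y with hG
  have Gid : ∀ y, n₂ (G y) = h (n₁ y) := by
    intro y
    by_cases hy : n₁ y ∈ S₁
    · rw [hG]; simp only [dif_pos hy]; exact (conv y hy).choose_spec.1
    · rw [hG]; simp only [dif_neg hy]; exact (key y hy).2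
  have Gconv : ∀ y (hy : n₁ y ∈ S₁), Filter.Tendsto g₀ (𝓝[U₁] y) (𝓝 (G y)) := by
    intro y hy
    rw [hG]; simp only [dif_pos hy]; exact (conv y hy).choose_spec.2
  have Geq : ∀ y, n₁ y ∉ S₁ → G y = g₀ y := fun y hy => by
    rw [hG]; simp only [dif_neg hy]
  refine ⟨G, continuous_iff_continuousAt.2 fun y => ?_, Gid⟩
  by_cases hy : n₁ y ∈ S₁
  · -- singular point: use the closed (compact) neighbourhood basis
    rw [ContinuousAt, (nhds_basis_opens (G y)).tendsto_right_iff]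
    rintro N ⟨hgN, hNopen⟩
    obtain ⟨K, hK, hKN, hKcomp⟩ := local_compact_nhds (hNopen.mem_nhds hgN)
    have hKcl : IsClosed K := hKcomp.isClosed
    have hKmem : g₀ ⁻¹' K ∈ 𝓝[U₁] y := Gconv y hy hK
    rw [mem_nhdsWithin] at hKmem
    obtain ⟨O, hOopen, hyO, hOK⟩ := hKmem
    filter_upwards [hOopen.mem_nhds hyO] with y' hy'O
    by_cases hy' : n₁ y' ∈ S₁
    · haveI := hNB y'
      have hev : ∀ᶠ z in 𝓝[U₁] y', g₀ z ∈ K := by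
        filter_upwards [nhdsWithin_le_nhds (hOopen.mem_nhds hy'O), self_mem_nhdsWithin]
          with z hz1 hz2
        exact hOK ⟨hz1, hz2⟩
      have : G y' ∈ closure K := mem_closure_of_tendsto (Gconv y' hy') hev
      exact hKN (hKcl.closure_eq ▸ this)
    · rw [Geq y' hy']
      exact hKN (hOK ⟨hy'O, hy'⟩)
  · -- nonsingular point: the fibre is a singleton
    rw [ContinuousAt, (nhds_basis_opens (G y)).tendsto_right_iff]
    rintro N ⟨hgN, hNopen⟩
    have hMc : IsClosed (n₂ '' Nᶜ) := hn₂p.isClosedMap _ hNopen.isClosed_compl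
    have hxM : h (n₁ y) ∈ (n₂ '' Nᶜ)ᶜ := by
      rintro ⟨p, hpN, hp⟩
      have : p = g₀ y := single y hy p hp
      rw [this, ← Geq y hy] at hpN
      exact hpN hgN
    have hO : (h ∘ n₁) ⁻¹' (n₂ '' Nᶜ)ᶜ ∈ 𝓝 y :=
      (hMc.isOpen_compl.preimage (h.continuous.comp hn₁c)).mem_nhds hxM
    filter_upwards [hO] with y' hy'M
    by_contra hgy'
    exact hy'M ⟨G y', hgy', Gid y'⟩


/-- **Lifting homeomorphisms to normalisations.** Let `X₁, X₂` be (the underlying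
topological spaces of) reduced analytic spaces with singular loci `Σ₁, Σ₂`, and let
`nᵢ : X̂ᵢ → Xᵢ` be their normalisation maps: finite, proper, continuous surjections which
restrict to homeomorphisms over the complements of the singular loci, with
`X̂ᵢ ∖ nᵢ⁻¹(Σᵢ)` dense (genericity) and locally connected at the points of `nᵢ⁻¹(Σᵢ)`
(topological normality, reflecting that fibres of `nᵢ` correspond to irreducible
components of germs).  If `h : X₁ → X₂` is a homeomorphism with `h (Σ₁) = Σ₂`, then there
is a unique homeomorphism `g : X̂₁ → X̂₂` lifting `h`, i.e. with `n₂ ∘ g = h ∘ n₁`. -/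
theorem stmt5 {X₁ X₂ Y₁ Y₂ : Type*}
    [TopologicalSpace X₁] [TopologicalSpace X₂] [TopologicalSpace Y₁] [TopologicalSpace Y₂]
    [T2Space X₁] [T2Space X₂] [T2Space Y₁] [T2Space Y₂]
    [LocallyCompactSpace Y₁] [LocallyCompactSpace Y₂]
    (S₁ : Set X₁) (S₂ : Set X₂) (hS₁ : IsClosed S₁) (hS₂ : IsClosed S₂)
    (n₁ : Y₁ → X₁) (n₂ : Y₂ → X₂)
    (hn₁p : IsProperMap n₁) (hn₂p : IsProperMap n₂)
    (hn₁s : Function.Surjective n₁) (hn₂s : Function.Surjective n₂)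
    (hfin₁ : ∀ x : X₁, (n₁ ⁻¹' {x}).Finite) (hfin₂ : ∀ x : X₂, (n₂ ⁻¹' {x}).Finite)
    -- `nᵢ` restricts to a homeomorphism off the singular locus:
    (hbij₁ : Set.BijOn n₁ (n₁ ⁻¹' S₁)ᶜ S₁ᶜ) (hbij₂ : Set.BijOn n₂ (n₂ ⁻¹' S₂)ᶜ S₂ᶜ)
    -- genericity: the nonsingular part is dense upstairs:
    (hdense₁ : Dense (n₁ ⁻¹' S₁)ᶜ) (hdense₂ : Dense (n₂ ⁻¹' S₂)ᶜ)
    -- topological normality of the normalisations: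
    (hnorm₁ : ∀ y ∈ n₁ ⁻¹' S₁, LocallyConnectedAlongAt (n₁ ⁻¹' S₁)ᶜ y)
    (hnorm₂ : ∀ y ∈ n₂ ⁻¹' S₂, LocallyConnectedAlongAt (n₂ ⁻¹' S₂)ᶜ y)
    (h : X₁ ≃ₜ X₂) (hS : h '' S₁ = S₂) :
    ∃! g : Y₁ ≃ₜ Y₂, ∀ y : Y₁, n₂ (g y) = h (n₁ y) := by
  by_cases hne : Nonempty Y₁
  · -- main case
    haveI := hne
    haveI : Nonempty Y₂ := ⟨(hn₂s (h (n₁ (Classical.arbitrary Y₁)))).choose⟩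
    have hS2 : h.symm '' S₂ = S₁ := by
      rw [← hS, ← Set.image_comp]
      simp
    have hS' : ∀ x, h x ∈ S₂ ↔ x ∈ S₁ := by
      intro x
      constructor
      · intro hx
        rw [← hS] at hx
        obtain ⟨a, haS, ha⟩ := hx
        rwa [← h.injective ha]
      · intro hx
        rw [← hS]; exact ⟨x, hx, rfl⟩
    obtain ⟨G, hGc, hGid⟩ :=
      liftCont S₁ S₂ n₁ n₂ hn₁p.continuous hn₂p hfin₂ hbij₂ hdense₁ hnorm₁ h hS
    obtain ⟨G', hG'c, hG'id⟩ :=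
      liftCont S₂ S₁ n₂ n₁ hn₂p.continuous hn₁p hfin₁ hbij₁ hdense₂ hnorm₂ h.symm hS2
    -- generic points are mapped to generic points
    have hGU : ∀ y : Y₁, n₁ y ∉ S₁ → G y ∈ (n₂ ⁻¹' S₂)ᶜ := by
      intro y hy hc
      rw [Set.mem_preimage, hGid y, hS' _] at hc
      exact hy hc
    have hG'U : ∀ y : Y₂, n₂ y ∉ S₂ → G' y ∈ (n₁ ⁻¹' S₁)ᶜ := by
      intro y hy hc
      rw [Set.mem_preimage, hG'id y] at hc
      have := (hS' _).2 hc
      rw [Homeomorph.apply_symm_apply] at this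
      exact hy this
    have hGG : G' ∘ G = id := by
      apply Continuous.ext_on hdense₁ (hG'c.comp hGc) continuous_id
      intro y hy
      have hy' : n₁ y ∉ S₁ := hy
      have h1 : n₁ (G' (G y)) = n₁ y := by
        rw [hG'id, hGid, Homeomorph.symm_apply_apply]
      exact hbij₁.injOn (hG'U _ (fun hc => by
        rw [hGid y] at hc; exact hy' ((hS' _).1 hc))) hy h1
    have hGG' : G ∘ G' = id := by
      apply Continuous.ext_on hdense₂ (hGc.comp hG'c) continuous_id
      intro y hy
      have hy' : n₂ y ∉ S₂ := hy
      have h1 : n₂ (G (G' y)) = n₂ y := by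
        rw [hGid, hG'id, Homeomorph.apply_symm_apply]
      exact hbij₂.injOn (hGU _ (fun hc => by
        rw [hG'id y] at hc
        have := (hS' _).2 hc
        rw [Homeomorph.apply_symm_apply] at this
        exact hy' this)) hy h1
    refine ⟨⟨⟨G, G', fun y => congrFun hGG y, fun y => congrFun hGG' y⟩, hGc, hG'c⟩,
      hGid, ?_⟩
    intro g' hg'
    have hfun : (g' : Y₁ → Y₂) = G := by
      apply Continuous.ext_on hdense₁ g'.continuous hGc
      intro y hy
      have hy' : n₁ y ∉ S₁ := hy
      have h1 : n₂ (g' y) = n₂ (G y) := by rw [hg' y, hGid y]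
      have hmem : ∀ p : Y₂, n₂ p = h (n₁ y) → p ∈ (n₂ ⁻¹' S₂)ᶜ := by
        intro p hp hc
        rw [Set.mem_preimage, hp, hS' _] at hc
        exact hy' hc
      exact hbij₂.injOn (hmem _ (hg' y)) (hmem _ (hGid y)) h1
    exact Homeomorph.ext (fun y => congrFun hfun y)
  · -- degenerate case : everything is empty
    haveI : IsEmpty Y₁ := not_nonempty_iff.1 hne
    haveI : IsEmpty X₁ := ⟨fun x => isEmptyElim (hn₁s x).choose⟩
    haveI : IsEmpty X₂ := ⟨fun x => isEmptyElim (h.symm x)⟩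
    haveI : IsEmpty Y₂ := ⟨fun y => isEmptyElim (n₂ y)⟩
    have hc1 : Continuous (Equiv.equivOfIsEmpty Y₁ Y₂ : Y₁ → Y₂) :=
      continuous_of_const fun x => isEmptyElim x
    have hc2 : Continuous ((Equiv.equivOfIsEmpty Y₁ Y₂).symm : Y₂ → Y₁) :=
      continuous_of_const fun x => isEmptyElim x
    refine ⟨⟨Equiv.equivOfIsEmpty Y₁ Y₂, hc1, hc2⟩, fun y => isEmptyElim y, fun g' _ => ?_⟩
    exact Homeomorph.ext fun y => isEmptyElim y
end

section
/- Let $n : \hat X \to X$ be a finite, continuous, generically one-to-one surjection of locally compact Hausdorff spaces, where $\hat X$ is topologically normal (i.e. $\hat X \setminus \mathrm{Sing}(\hat X)$ is locally connected at every point of $\mathrm{Sing}(\hat X)$). Then $n$ coincides (as a continuous map) with the topological normalisation of $X$; in particular the topological normalisation of $X$ is unique up to homeomorphism over $X$. -/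
open Filter Topology Set Function

/-- `n : Y → X` is a topological normalisation of `X` (with distinguished "singular set"
`Σ ⊆ X`): a finite, proper, generically one-to-one continuous surjection from a
topologically normal space, i.e. `n` is a homeomorphism over `X ∖ Σ`, the nonsingular
part `Y ∖ n⁻¹(Σ)` is dense, and `Y` is topologically normal in the sense that
`Y ∖ n⁻¹(Σ)` is locally connected at every point of `n⁻¹(Σ)`. -/
structure IsTopologicalNormalisation {X Y : Type*} [TopologicalSpace X] [TopologicalSpace Y]
    (n : Y → X) (Ssing : Set X) : Prop where
  proper : IsProperMap n
  surj : Function.Surjective n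
  finite_fibres : ∀ x : X, (n ⁻¹' {x}).Finite
  bijOn : Set.BijOn n (n ⁻¹' Ssing)ᶜ Ssingᶜ
  dense : Dense (n ⁻¹' Ssing)ᶜ
  normal : ∀ y ∈ n ⁻¹' Ssing, LocallyConnectedAlongAt (n ⁻¹' Ssing)ᶜ y

private lemma exists_open_preimage {Y X : Type*} [TopologicalSpace Y] [TopologicalSpace X]
    {f : Y → X} (hf : IsClosedMap f) {x : X} {O : Set Y} (hO : IsOpen O)
    (h : f ⁻¹' {x} ⊆ O) : ∃ W : Set X, IsOpen W ∧ x ∈ W ∧ f ⁻¹' W ⊆ O := by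
  refine ⟨(f '' Oᶜ)ᶜ, (hf _ hO.isClosed_compl).isOpen_compl, ?_, ?_⟩
  · rintro ⟨z, hzO, hzx⟩
    exact hzO (h (show z ∈ f ⁻¹' {x} from hzx))
  · intro z hz
    by_contra hzO
    exact hz ⟨z, hzO, rfl⟩

private theorem exists_lift {X Y Y' : Type*}
    [TopologicalSpace X] [TopologicalSpace Y] [TopologicalSpace Y']
    [T2Space X] [T2Space Y']
    (Ssing : Set X) (hSc : IsClosed Ssing)
    (n : Y → X) (n' : Y' → X)
    (hn : IsTopologicalNormalisation n Ssing) (hn' : IsTopologicalNormalisation n' Ssing) :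
    ∃ g : Y → Y', Continuous g ∧ ∀ y, n' (g y) = n y := by
  by_cases hY : Nonempty Y
  swap
  · rw [not_nonempty_iff] at hY
    exact ⟨fun y => isEmptyElim y, continuous_iff_continuousAt.2 fun y => isEmptyElim y,
      fun y => isEmptyElim y⟩
  haveI : Nonempty Y' := ⟨(hn'.surj (n hY.some)).choose⟩
  set Z : Set Y := (n ⁻¹' Ssing)ᶜ with hZdef
  set Z' : Set Y' := (n' ⁻¹' Ssing)ᶜ with hZ'def
  set inv' : X → Y' := Function.invFunOn n' Z' with hinvdef
  have hinv : ∀ x ∉ Ssing, inv' x ∈ Z' ∧ n' (inv' x) = x := by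
    intro x hx
    obtain ⟨a, ha, hax⟩ := hn'.bijOn.surjOn (show x ∈ Ssingᶜ from hx)
    exact ⟨Function.invFunOn_mem ⟨a, ha, hax⟩, Function.invFunOn_eq ⟨a, ha, hax⟩⟩
  have hfibZ' : ∀ {x : X}, x ∉ Ssing → ∀ {y' : Y'}, n' y' = x → y' ∈ Z' := by
    intro x hx y' hy'
    simp only [hZ'def, mem_compl_iff, mem_preimage, hy']
    exact hx
  have hfib_eq : ∀ x ∉ Ssing, ∀ y', n' y' = x → y' = inv' x := by
    intro x hx y' hy'
    exact hn'.bijOn.injOn (hfibZ' hx hy') (hinv x hx).1 (hy'.trans (hinv x hx).2.symm)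
  have hZo : IsOpen Z := (hSc.preimage hn.proper.continuous).isOpen_compl
  -- continuity of the inverse on the regular part
  have hcont_inv : ContinuousOn inv' Ssingᶜ := by
    intro x hx
    rw [ContinuousWithinAt, tendsto_nhds]
    intro U hUo hU
    have hfibsub : n' ⁻¹' {x} ⊆ U := by
      intro y' hy'
      rw [hfib_eq x hx y' hy']
      exact hU
    obtain ⟨W, hWo, hxW, hWsub⟩ := exists_open_preimage hn'.proper.isClosedMap hUo hfibsub
    rw [mem_nhdsWithin]
    refine ⟨W, hWo, hxW, ?_⟩
    rintro x₂ ⟨hx₂W, hx₂S⟩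
    exact hWsub (show inv' x₂ ∈ n' ⁻¹' W by rw [mem_preimage, (hinv x₂ hx₂S).2]; exact hx₂W)
  set h : Y → Y' := fun y => inv' (n y) with hhdef
  have hyZ : ∀ y ∈ Z, n y ∉ Ssing := fun y hy => hy
  have hy' : ∀ y ∈ Z, n' (h y) = n y := fun y hy => (hinv _ (hyZ y hy)).2
  have hyZ' : ∀ y ∈ Z, h y ∈ Z' := fun y hy => (hinv _ (hyZ y hy)).1
  have hconth : ContinuousOn h Z :=
    hcont_inv.comp hn.proper.continuous.continuousOn (fun y hy => hyZ y hy)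
  have hne : ∀ y : Y, (𝓝[Z] y).NeBot := fun y =>
    mem_closure_iff_nhdsWithin_neBot.1 (hn.dense y)
  have key : ∀ y : Y, ∃ y' : Y', n' y' = n y ∧ ClusterPt y' (map h (𝓝[Z] y)) := by
    intro y
    haveI := hne y
    have hmapn : Tendsto n' (map h (𝓝[Z] y)) (𝓝 (n y)) := by
      rw [tendsto_map'_iff]
      refine Tendsto.congr' ?_ ((hn.proper.continuous.tendsto y).mono_left nhdsWithin_le_nhds)
      exact eventuallyEq_of_mem self_mem_nhdsWithin (fun z hz => (hy' z hz).symm)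
    have : MapClusterPt (n y) (map h (𝓝[Z] y)) n' := by
      rw [MapClusterPt, ClusterPt, inf_of_le_right hmapn]
      exact (hne y).map h |>.map n'
    exact hn'.proper.clusterPt_of_mapClusterPt this
  choose g hgn hgc using key
  -- the cluster-point membership fact
  have hclu : ∀ z : Y, ∀ N ∈ 𝓝 (g z), ∀ A ∈ 𝓝[Z] z, (N ∩ h '' A).Nonempty := by
    intro z N hN A hA
    exact (hgc z).nonempty_of_mem
      (inter_mem (mem_inf_of_left hN) (mem_inf_of_right (image_mem_map hA)))
  have hgZ : ∀ y ∈ Z, g y = h y := by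
    intro y hy
    haveI := hne y
    have ht : Tendsto h (𝓝[Z] y) (𝓝 (h y)) := hconth y hy
    exact eq_of_nhds_neBot ((hgc y).mono ht)
  refine ⟨g, ?_, hgn⟩
  rw [continuous_iff_continuousAt]
  intro y
  by_cases hy : y ∈ Z
  · have hev : ∀ᶠ z in 𝓝 y, h z = g z :=
      eventually_of_mem (hZo.mem_nhds hy) (fun z hz => (hgZ z hz).symm)
    exact ((hconth y hy).continuousAt (hZo.mem_nhds hy)).congr hev
  · -- singular point
    have hyS : y ∈ n ⁻¹' Ssing := by simpa [hZdef] using hy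
    rw [ContinuousAt, tendsto_nhds]
    intro U' hU'o hgyU'
    have hfin : (n' ⁻¹' {n y}).Finite := hn'.finite_fibres (n y)
    obtain ⟨U₁, U₂, hU₁o, hU₂o, hgy1, hK2, hdisj⟩ :=
      SeparatedNhds.of_isCompact_isCompact isCompact_singleton
        ((hfin.diff : (n' ⁻¹' {n y} \ {g y}).Finite).isCompact) (disjoint_sdiff_right (s := {g y}))
    set V₁ : Set Y' := U₁ ∩ U' with hV₁def
    have hV₁o : IsOpen V₁ := hU₁o.inter hU'o
    have hgyV₁ : g y ∈ V₁ := ⟨hgy1 rfl, hgyU'⟩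
    have hdisj' : Disjoint V₁ U₂ := hdisj.mono_left inter_subset_left
    have hfibsub : n' ⁻¹' {n y} ⊆ V₁ ∪ U₂ := by
      intro z hz
      by_cases hzg : z = g y
      · exact Or.inl (hzg ▸ hgyV₁)
      · exact Or.inr (hK2 ⟨hz, hzg⟩)
    obtain ⟨W, hWo, hxW, hWsub⟩ :=
      exists_open_preimage hn'.proper.isClosedMap (hV₁o.union hU₂o) hfibsub
    have hnW : n ⁻¹' W ∈ 𝓝 y :=
      hn.proper.continuous.continuousAt.preimage_mem_nhds (hWo.mem_nhds hxW)
    obtain ⟨V, hV, hVsub, hVconn⟩ := hn.normal y hyS _ hnW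
    have hSsub : h '' (V ∩ Z) ⊆ V₁ ∪ U₂ := by
      rintro _ ⟨z, ⟨hzV, hzZ⟩, rfl⟩
      exact hWsub (show h z ∈ n' ⁻¹' W by rw [mem_preimage, hy' z hzZ]; exact hVsub hzV)
    have hVZmem : V ∩ Z ∈ 𝓝[Z] y := inter_mem (nhdsWithin_le_nhds hV) self_mem_nhdsWithin
    have hmeet : (h '' (V ∩ Z) ∩ V₁).Nonempty := by
      obtain ⟨p, hp1, hp2⟩ := hclu y V₁ (hV₁o.mem_nhds hgyV₁) (V ∩ Z) hVZmem
      exact ⟨p, hp2, hp1⟩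
    have hScn : IsPreconnected (h '' (V ∩ Z)) :=
      hVconn.image h (hconth.mono inter_subset_right)
    have hS1 : h '' (V ∩ Z) ⊆ V₁ := by
      intro w hw
      rcases hSsub hw with hw1 | hw2
      · exact hw1
      · exfalso
        obtain ⟨p, hpS, hp1, hp2⟩ := hScn V₁ U₂ hV₁o hU₂o hSsub hmeet ⟨w, hw, hw2⟩
        exact Set.disjoint_left.1 hdisj' hp1 hp2
    have hIV : interior V ∈ 𝓝 y := interior_mem_nhds.2 hV
    refine mem_of_superset hIV ?_
    intro z hz
    have hzV : z ∈ V := interior_subset hz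
    have hgzO : g z ∈ V₁ ∪ U₂ :=
      hWsub (show g z ∈ n' ⁻¹' W by rw [mem_preimage, hgn z]; exact hVsub hzV)
    have hgzcl : g z ∈ closure V₁ := by
      rw [mem_closure_iff_nhds]
      intro N hN
      have hA : interior V ∩ Z ∈ 𝓝[Z] z :=
        inter_mem (nhdsWithin_le_nhds (isOpen_interior.mem_nhds hz)) self_mem_nhdsWithin
      obtain ⟨p, hpN, hpS⟩ := hclu z N hN (interior V ∩ Z) hA
      exact ⟨p, hpN, hS1 (image_mono (f := h) (inter_subset_inter interior_subset subset_rfl) hpS)⟩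
    have hnot2 : g z ∉ U₂ := fun h2 =>
      Set.disjoint_left.1 (hdisj'.closure_left hU₂o) hgzcl h2
    rcases hgzO with h1 | h2
    · exact h1.2
    · exact absurd h2 hnot2

/-- **Uniqueness of the topological normalisation.** If `n : X̂ → X` is a finite,
generically one-to-one continuous surjection from a topologically normal locally compact
Hausdorff space, then `n` coincides, as a continuous map, with the topological
normalisation of `X`: any two topological normalisations `n : Y → X` and `n' : Y' → X`
differ by a unique homeomorphism over `X`. -/
theorem stmt7 {X Y Y' : Type*}
    [TopologicalSpace X] [TopologicalSpace Y] [TopologicalSpace Y']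
    [T2Space X] [T2Space Y] [T2Space Y']
    [LocallyCompactSpace Y] [LocallyCompactSpace Y']
    (Ssing : Set X) (hSc : IsClosed Ssing)
    (n : Y → X) (n' : Y' → X)
    (hn : IsTopologicalNormalisation n Ssing) (hn' : IsTopologicalNormalisation n' Ssing) :
    ∃! g : Y ≃ₜ Y', ∀ y : Y, n' (g y) = n y := by
  obtain ⟨g, hgc, hgn⟩ := exists_lift Ssing hSc n n' hn hn'
  obtain ⟨g', hg'c, hg'n⟩ := exists_lift Ssing hSc n' n hn' hn
  have hleft : g' ∘ g = id := by
    refine Continuous.ext_on hn.dense (hg'c.comp hgc) continuous_id ?_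
    intro y hy
    have h1 : n' (g y) = n y := hgn y
    have h2 : n (g' (g y)) = n y := by rw [hg'n, h1]
    have hmem : g' (g y) ∈ (n ⁻¹' Ssing)ᶜ := by
      simp only [mem_compl_iff, mem_preimage, h2]
      exact hy
    exact hn.bijOn.injOn hmem hy h2
  have hright : g ∘ g' = id := by
    refine Continuous.ext_on hn'.dense (hgc.comp hg'c) continuous_id ?_
    intro y hy
    have h1 : n (g' y) = n' y := hg'n y
    have h2 : n' (g (g' y)) = n' y := by rw [hgn, h1]
    have hmem : g (g' y) ∈ (n' ⁻¹' Ssing)ᶜ := by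
      simp only [mem_compl_iff, mem_preimage, h2]
      exact hy
    exact hn'.bijOn.injOn hmem hy h2
  refine ⟨⟨⟨g, g', congrFun hleft, congrFun hright⟩, hgc, hg'c⟩, hgn, ?_⟩
  intro G₂ hG₂
  have hfun : ⇑G₂ = g := by
    refine Continuous.ext_on hn.dense G₂.continuous hgc ?_
    intro y hy
    have h1 : n' (G₂ y) = n y := hG₂ y
    have h2 : n' (g y) = n y := hgn y
    have hm1 : G₂ y ∈ (n' ⁻¹' Ssing)ᶜ := by
      simp only [mem_compl_iff, mem_preimage, h1]; exact hy
    have hm2 : g y ∈ (n' ⁻¹' Ssing)ᶜ := by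
      simp only [mem_compl_iff, mem_preimage, h2]; exact hy
    exact hn'.bijOn.injOn hm1 hm2 (h1.trans h2.symm)
  exact Homeomorph.ext (congrFun hfun)
end
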